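/- arXiv:2605.29294 — 3 statements merged into one kernel-verified Lean document; each statement's English description precedes it below -/
import Mathlib

section
/- Let n ≥ 3, let A₁, A₂ be real symmetric n×n matrices, and let 0 < α₁ < α₂ < ∞. Then the set W₃ = {(xᵀA₁x, xᵀA₂x) : α₁ ≤ xᵀx ≤ α₂, x ∈ ℝⁿ} ⊂ ℝ² is convex and compact. -/
/-!
Brickman's argument. Let `F x = (xᵀA₁x, xᵀA₂x)` and let `p ≠ q` be values of `F` on the unit
sphere. A point `x` of the sphere has `F x` on the line `pq` iff `xᵀBx = 0` for a symmetric `B`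
combining `A₁`, `A₂` and `I`. Diagonalizing `B`, the points of this zero set are the signed square
roots of the points of the convex polytope `{s ∈ Δ | ∑ λᵢ sᵢ = 0}`. Paths in the polytope lift
with fixed signs, and a sign can be changed by passing through a point of the polytope where that
coordinate vanishes; for `n ≥ 3` this joins any two points of the zero set up to `x ↦ -x`, which
`F` does not see. So the image of the zero set is a connected subset of the line `pq` containing
`p` and `q`, hence contains the segment `[p, q]`.

Writing `x = √t • u` with `uᵀu = 1`, the image of the annulus is `[α₁, α₂] • W` for the convex
image `W` of the sphere, and scaling a convex set by an interval of nonnegative reals keeps it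
convex.
-/

open Matrix Set
open scoped Pointwise

section UpToSign

variable {E F : Type*} [TopologicalSpace E] [Neg E] [TopologicalSpace F]

def IsPathConnectedUpToSign (S : Set E) : Prop :=
  ∀ u ∈ S, ∀ v ∈ S, JoinedIn S u v ∨ JoinedIn S u (-v)

theorem IsPathConnectedUpToSign.image [Neg F] {S : Set E} (h : IsPathConnectedUpToSign S)
    {f : E → F} (hf : Continuous f) (hodd : ∀ x, f (-x) = -f x) :
    IsPathConnectedUpToSign (f '' S) := by
  rintro _ ⟨u, hu, rfl⟩ _ ⟨v, hv, rfl⟩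
  rcases h u hu v hv with huv | huv
  · exact .inl (huv.map hf)
  · exact .inr (hodd v ▸ huv.map hf)

theorem IsPathConnectedUpToSign.isPreconnected_image {S : Set E}
    (h : IsPathConnectedUpToSign S) {f : E → F} (hf : Continuous f)
    (heven : ∀ x, f (-x) = f x) : IsPreconnected (f '' S) := by
  refine isPreconnected_of_forall_pair ?_
  rintro _ ⟨u, hu, rfl⟩ _ ⟨v, hv, rfl⟩
  obtain ⟨γ, hγ⟩ : JoinedIn (f '' S) (f u) (f v) := by
    rcases h u hu v hv with huv | huv
    · exact huv.map hf
    · exact heven v ▸ huv.map hf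
  exact ⟨range γ, range_subset_iff.2 hγ, ⟨0, γ.source⟩, ⟨1, γ.target⟩,
    isPreconnected_range γ.continuous⟩

end UpToSign

theorem segment_subset_of_isPreconnected {C : Set (ℝ × ℝ)} (hC : IsPreconnected C)
    {p q : ℝ × ℝ} (hp : p ∈ C) (hq : q ∈ C)
    (hline : ∀ z ∈ C, (q.1 - p.1) * (z.2 - p.2) = (q.2 - p.2) * (z.1 - p.1)) :
    segment ℝ p q ⊆ C := by
  rcases eq_or_ne p q with rfl | hpq
  · simpa using hp
  set d₁ := q.1 - p.1
  set d₂ := q.2 - p.2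
  have hD : 0 < d₁ ^ 2 + d₂ ^ 2 := by
    by_contra! h
    have h₁ : d₁ = 0 := by nlinarith [sq_nonneg d₁, sq_nonneg d₂]
    have h₂ : d₂ = 0 := by nlinarith [sq_nonneg d₁, sq_nonneg d₂]
    exact hpq (Prod.ext (sub_eq_zero.1 h₁).symm (sub_eq_zero.1 h₂).symm)
  set ℓ : ℝ × ℝ → ℝ := fun z => d₁ * (z.1 - p.1) + d₂ * (z.2 - p.2)
  rw [segment_eq_image']
  rintro _ ⟨θ, ⟨hθ0, hθ1⟩, rfl⟩
  obtain ⟨w, hw, hwℓ⟩ : θ * (d₁ ^ 2 + d₂ ^ 2) ∈ ℓ '' C := by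
    refine (hC.image ℓ (by fun_prop : Continuous ℓ).continuousOn).Icc_subset
      (mem_image_of_mem ℓ hp) (mem_image_of_mem ℓ hq) ?_
    have hℓp : ℓ p = 0 := by simp [ℓ]
    have hℓq : ℓ q = d₁ ^ 2 + d₂ ^ 2 := by simp only [ℓ]; ring
    rw [hℓp, hℓq]
    exact ⟨by positivity, mul_le_of_le_one_left hD.le hθ1⟩
  -- `ℓ` is injective on the line through `p` and `q`
  have hwline := hline w hw
  simp only [ℓ] at hwℓ
  have h₁ : (d₁ ^ 2 + d₂ ^ 2) * (w.1 - (p.1 + θ * d₁)) = 0 := by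
    linear_combination d₁ * hwℓ - d₂ * hwline
  have h₂ : (d₁ ^ 2 + d₂ ^ 2) * (w.2 - (p.2 + θ * d₂)) = 0 := by
    linear_combination d₂ * hwℓ + d₁ * hwline
  convert hw using 1
  ext
  · show p.1 + θ * d₁ = w.1
    linarith [(mul_eq_zero.1 h₁).resolve_left hD.ne']
  · show p.2 + θ * d₂ = w.2
    linarith [(mul_eq_zero.1 h₂).resolve_left hD.ne']

theorem Convex.smul_set_of_nonneg {𝕜 E : Type*} [Field 𝕜] [LinearOrder 𝕜] [IsStrictOrderedRing 𝕜]
    [AddCommGroup E] [Module 𝕜 E] {T : Set 𝕜} {s : Set E} (hT : Convex 𝕜 T)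
    (hT0 : T ⊆ Ici 0) (hs : Convex 𝕜 s) : Convex 𝕜 (T • s) := by
  rintro _ ⟨t₁, ht₁, x₁, hx₁, rfl⟩ _ ⟨t₂, ht₂, x₂, hx₂, rfl⟩ a b ha hb hab
  have ht : a * t₁ + b * t₂ ∈ T := hT ht₁ ht₂ ha hb hab
  have h₁ : 0 ≤ a * t₁ := mul_nonneg ha (hT0 ht₁)
  have h₂ : 0 ≤ b * t₂ := mul_nonneg hb (hT0 ht₂)
  rw [mem_smul]
  rcases (add_nonneg h₁ h₂).eq_or_lt with h | h
  · obtain ⟨ha₁, hb₂⟩ := (add_eq_zero_iff_of_nonneg h₁ h₂).1 h.symm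
    refine ⟨0, h ▸ ht, x₁, hx₁, ?_⟩
    simp only [smul_smul, ha₁, hb₂, zero_smul, add_zero]
  · refine ⟨_, ht, (a * t₁ / (a * t₁ + b * t₂)) • x₁ + (b * t₂ / (a * t₁ + b * t₂)) • x₂,
      hs hx₁ hx₂ (div_nonneg h₁ h.le) (div_nonneg h₂ h.le) (by field_simp), ?_⟩
    simp only [smul_add, smul_smul]
    congr 2 <;> field_simp

section SignedSqrt

variable {ι : Type*}

noncomputable def signedSqrt (ε s : ι → ℝ) : ι → ℝ := fun i => ε i * √(s i)

theorem continuous_signedSqrt (ε : ι → ℝ) : Continuous (signedSqrt ε) := by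
  unfold signedSqrt; fun_prop

theorem signedSqrt_sq {ε s : ι → ℝ} (hε : ∀ i, ε i ^ 2 = 1) (hs : ∀ i, 0 ≤ s i) :
    signedSqrt ε s ^ 2 = s := by
  ext i
  simp [signedSqrt, mul_pow, hε i, Real.sq_sqrt (hs i)]

theorem signedSqrt_neg (ε s : ι → ℝ) : signedSqrt (-ε) s = -signedSqrt ε s := by
  ext i; simp [signedSqrt]

theorem signedSqrt_congr {ε η s : ι → ℝ} (h : ∀ i, s i ≠ 0 → ε i = η i) :
    signedSqrt ε s = signedSqrt η s := by
  ext i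
  by_cases hi : s i = 0
  · simp [signedSqrt, hi]
  · simp [signedSqrt, h i hi]

theorem exists_signedSqrt_sq_eq (x : ι → ℝ) :
    ∃ ε : ι → ℝ, (∀ i, ε i ^ 2 = 1) ∧ signedSqrt ε (x ^ 2) = x := by
  refine ⟨fun i => if 0 ≤ x i then 1 else -1, fun i => by dsimp only; split_ifs <;> norm_num, ?_⟩
  ext i
  simp only [signedSqrt, Pi.pow_apply, Real.sqrt_sq_eq_abs]
  split_ifs with h
  · simp [abs_of_nonneg h]
  · simp [abs_of_neg (not_le.1 h)]

end SignedSqrt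

section QuadraticForms

variable {ι : Type*} [Fintype ι]

def sphereZeroSet (B : Matrix ι ι ℝ) : Set (ι → ℝ) :=
  {x | x ⬝ᵥ x = 1 ∧ x ⬝ᵥ B *ᵥ x = 0}

def balancedSimplex (d : ι → ℝ) : Set (ι → ℝ) :=
  stdSimplex ℝ ι ∩ {s | d ⬝ᵥ s = 0}

theorem convex_balancedSimplex (d : ι → ℝ) : Convex ℝ (balancedSimplex d) :=
  (convex_stdSimplex ℝ ι).inter <|
    convex_hyperplane ⟨dotProduct_add d, fun c s => dotProduct_smul c d s⟩ 0

theorem balancedSimplex_neg (d : ι → ℝ) : balancedSimplex (-d) = balancedSimplex d := by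
  simp [balancedSimplex, neg_dotProduct]

theorem exists_nonpos_of_mem_balancedSimplex {d s : ι → ℝ} (hs : s ∈ balancedSimplex d) :
    ∃ a, d a ≤ 0 := by
  have : Nonempty ι := by
    by_contra h
    simpa [not_nonempty_iff.1 h] using hs.1.2
  obtain ⟨a, ha⟩ := Finite.exists_min d
  refine ⟨a, ?_⟩
  calc d a = ∑ i, d a * s i := by rw [← Finset.mul_sum, hs.1.2, mul_one]
    _ ≤ ∑ i, d i * s i := Finset.sum_le_sum fun i _ =>
        mul_le_mul_of_nonneg_right (ha i) (hs.1.1 i)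
    _ = 0 := hs.2

theorem smul_dotProduct_smul (c : ℝ) (x : ι → ℝ) : (c • x) ⬝ᵥ (c • x) = c ^ 2 * (x ⬝ᵥ x) := by
  simp only [smul_dotProduct, dotProduct_smul, smul_eq_mul]; ring

theorem dotProduct_conj_mulVec (U D : Matrix ι ι ℝ) (x : ι → ℝ) :
    x ⬝ᵥ (U * D * Uᵀ) *ᵥ x = (Uᵀ *ᵥ x) ⬝ᵥ D *ᵥ (Uᵀ *ᵥ x) := by
  rw [← mulVec_mulVec, ← mulVec_mulVec, dotProduct_mulVec, mulVec_transpose]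

def jointQuadForm (A₁ A₂ : Matrix ι ι ℝ) (x : ι → ℝ) : ℝ × ℝ :=
  (x ⬝ᵥ A₁ *ᵥ x, x ⬝ᵥ A₂ *ᵥ x)

theorem continuous_jointQuadForm (A₁ A₂ : Matrix ι ι ℝ) : Continuous (jointQuadForm A₁ A₂) := by
  unfold jointQuadForm; fun_prop

theorem jointQuadForm_neg (A₁ A₂ : Matrix ι ι ℝ) (x : ι → ℝ) :
    jointQuadForm A₁ A₂ (-x) = jointQuadForm A₁ A₂ x := by
  simp [jointQuadForm, mulVec_neg]

theorem jointQuadForm_smul (A₁ A₂ : Matrix ι ι ℝ) (c : ℝ) (x : ι → ℝ) :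
    jointQuadForm A₁ A₂ (c • x) = c ^ 2 • jointQuadForm A₁ A₂ x := by
  simp only [jointQuadForm, mulVec_smul, dotProduct_smul, smul_dotProduct, Prod.smul_mk,
    smul_eq_mul]
  ext <;> ring

theorem isCompact_setOf_dotProduct_self_mem_Icc (a b : ℝ) :
    IsCompact {x : ι → ℝ | x ⬝ᵥ x ∈ Icc a b} := by
  refine Metric.isCompact_of_isClosed_isBounded
    (isClosed_Icc.preimage (continuous_id.dotProduct continuous_id)) ?_
  refine isBounded_iff_forall_norm_le.2 ⟨√b, fun x hx => ?_⟩
  refine (pi_norm_le_iff_of_nonneg (Real.sqrt_nonneg b)).2 fun i => ?_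
  rw [Real.norm_eq_abs]
  refine Real.abs_le_sqrt (le_trans ?_ hx.2)
  simpa [sq, dotProduct] using
    Finset.single_le_sum (fun j _ => mul_self_nonneg (x j)) (Finset.mem_univ i)

variable [DecidableEq ι]

theorem mem_sphereZeroSet_diagonal {d x : ι → ℝ} :
    x ∈ sphereZeroSet (diagonal d) ↔ x ^ 2 ∈ balancedSimplex d := by
  have hsq : x ⬝ᵥ x = ∑ i, (x ^ 2) i := by simp [dotProduct, sq]
  have hd : x ⬝ᵥ diagonal d *ᵥ x = d ⬝ᵥ x ^ 2 := by
    simp only [dotProduct, mulVec_diagonal, Pi.pow_apply]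
    exact Finset.sum_congr rfl fun i _ => by ring
  simp [sphereZeroSet, balancedSimplex, stdSimplex, hsq, hd, sq_nonneg]

theorem signedSqrt_mem_sphereZeroSet {d ε s : ι → ℝ} (hε : ∀ i, ε i ^ 2 = 1)
    (hs : s ∈ balancedSimplex d) : signedSqrt ε s ∈ sphereZeroSet (diagonal d) := by
  rwa [mem_sphereZeroSet_diagonal, signedSqrt_sq hε hs.1.1]

theorem joinedIn_signedSqrt {d ε s₀ s₁ : ι → ℝ} (hε : ∀ i, ε i ^ 2 = 1)
    (hs₀ : s₀ ∈ balancedSimplex d) (hs₁ : s₁ ∈ balancedSimplex d) :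
    JoinedIn (sphereZeroSet (diagonal d)) (signedSqrt ε s₀) (signedSqrt ε s₁) :=
  ((JoinedIn.of_segment_subset ((convex_balancedSimplex d).segment_subset hs₀ hs₁)).map
    (continuous_signedSqrt ε)).mono <| image_subset_iff.2 fun _ hs =>
      signedSqrt_mem_sphereZeroSet hε hs

theorem joinedIn_signedSqrt_of_eqOn_support {d ε η s s' : ι → ℝ} (hε : ∀ i, ε i ^ 2 = 1)
    (hη : ∀ i, η i ^ 2 = 1) (hs : s ∈ balancedSimplex d) (hs' : s' ∈ balancedSimplex d)
    (h : ∀ i, s' i ≠ 0 → ε i = η i) :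
    JoinedIn (sphereZeroSet (diagonal d)) (signedSqrt ε s) (signedSqrt η s) :=
  (joinedIn_signedSqrt hε hs hs').trans (signedSqrt_congr h ▸ joinedIn_signedSqrt hη hs' hs)

theorem exists_mem_balancedSimplex_support_subset {d : ι → ℝ} {a b : ι} (ha : d a ≤ 0)
    (hb : 0 ≤ d b) : ∃ s ∈ balancedSimplex d, ∀ i, s i ≠ 0 → i = a ∨ i = b := by
  -- if `d a = d b` (so both vanish), `x / 0 = 0` gives `θ = 0` and the point `Pi.single b 1`
  set θ := d b / (d b - d a)
  have hθ : θ * (d b - d a) = d b := by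
    rcases eq_or_ne (d b - d a) 0 with h | h
    · simp only [θ, h, div_zero, zero_mul]; linarith
    · exact div_mul_cancel₀ _ h
  have hθ0 : 0 ≤ θ := div_nonneg hb (by linarith)
  have hθ1 : θ ≤ 1 := div_le_one_of_le₀ (by linarith) (by linarith)
  clear_value θ
  refine ⟨θ • Pi.single a 1 + (1 - θ) • Pi.single b 1, ⟨?_, ?_⟩, fun i hi => ?_⟩
  · exact convex_stdSimplex ℝ ι (single_mem_stdSimplex ℝ a) (single_mem_stdSimplex ℝ b)
      hθ0 (by linarith) (by ring)
  · simp only [mem_ofPred_eq, dotProduct_add, dotProduct_smul, dotProduct_single, smul_eq_mul]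
    linear_combination -hθ
  · by_contra! h
    simp [h.1, h.2] at hi

theorem exists_mem_balancedSimplex_pair (hι : 3 ≤ Fintype.card ι) {d : ι → ℝ}
    (hne : (balancedSimplex d).Nonempty) :
    ∃ s ∈ balancedSimplex d, ∃ s' ∈ balancedSimplex d, ∃ b, ∀ i, s i ≠ 0 → s' i ≠ 0 → i = b := by
  obtain ⟨s₀, hs₀⟩ := hne
  obtain ⟨a, ha⟩ := exists_nonpos_of_mem_balancedSimplex hs₀
  obtain ⟨c, hc⟩ := exists_nonpos_of_mem_balancedSimplex ((balancedSimplex_neg d).symm ▸ hs₀)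
  rw [Pi.neg_apply, neg_nonpos] at hc
  obtain ⟨k, -, hk⟩ : ∃ k ∈ Finset.univ, k ∉ ({a, c} : Finset ι) := by
    refine Finset.exists_mem_notMem_of_card_lt_card (Finset.card_le_two.trans_lt ?_)
    rw [Finset.card_univ]; omega
  simp only [Finset.mem_insert, Finset.mem_singleton, not_or] at hk
  obtain ⟨s, hs, hsupp⟩ := exists_mem_balancedSimplex_support_subset ha hc
  rcases le_total (d k) 0 with hk0 | hk0
  · obtain ⟨s', hs', hsupp'⟩ := exists_mem_balancedSimplex_support_subset hk0 hc
    refine ⟨s, hs, s', hs', c, fun i hi hi' => ?_⟩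
    grind
  · obtain ⟨s', hs', hsupp'⟩ := exists_mem_balancedSimplex_support_subset ha hk0
    refine ⟨s, hs, s', hs', a, fun i hi hi' => ?_⟩
    grind

theorem isPathConnectedUpToSign_diagonal (hι : 3 ≤ Fintype.card ι) (d : ι → ℝ) :
    IsPathConnectedUpToSign (sphereZeroSet (diagonal d)) := by
  intro u hu v hv
  rw [mem_sphereZeroSet_diagonal] at hu hv
  obtain ⟨ε, hε, hεu⟩ := exists_signedSqrt_sq_eq u
  obtain ⟨δ, hδ, hδv⟩ := exists_signedSqrt_sq_eq v
  rw [← hεu, ← hδv]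
  obtain ⟨s, hs, s', hs', b, hb⟩ := exists_mem_balancedSimplex_pair hι ⟨_, hu⟩
  -- replace `δ` by `±δ` so that it agrees with `ε` at `b`, where `s` and `s'` may both be nonzero
  obtain ⟨δ', hδ', hδ'b, hv'⟩ : ∃ δ' : ι → ℝ, (∀ i, δ' i ^ 2 = 1) ∧ δ' b = ε b ∧
      (signedSqrt δ' (v ^ 2) = signedSqrt δ (v ^ 2) ∨
        signedSqrt δ' (v ^ 2) = -signedSqrt δ (v ^ 2)) := by
    rcases sq_eq_sq_iff_eq_or_eq_neg.1 ((hε b).trans (hδ b).symm) with h | h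
    · exact ⟨δ, hδ, h.symm, .inl rfl⟩
    · exact ⟨-δ, by simpa using hδ, by simp [h], .inr (signedSqrt_neg δ _)⟩
  set η : ι → ℝ := fun i => if s' i = 0 then δ' i else ε i
  have hη : ∀ i, η i ^ 2 = 1 := fun i => by dsimp only [η]; split_ifs; exacts [hδ' i, hε i]
  have hηδ' : signedSqrt η s = signedSqrt δ' s := signedSqrt_congr fun i hi => by
    by_cases hi' : s' i = 0
    · simp [η, hi']
    · simp [η, hb i hi hi', hδ'b]
  have hjoin : JoinedIn (sphereZeroSet (diagonal d)) (signedSqrt ε (u ^ 2))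
      (signedSqrt δ' (v ^ 2)) :=
    (joinedIn_signedSqrt hε hu hs).trans <|
      (joinedIn_signedSqrt_of_eqOn_support hε hη hs hs' fun i hi => by simp [η, hi]).trans <|
        hηδ' ▸ joinedIn_signedSqrt hδ' hs hv
  rcases hv' with h | h
  · exact .inl (h ▸ hjoin)
  · exact .inr (h ▸ hjoin)

theorem sphereZeroSet_conj {U : Matrix ι ι ℝ} (hU : U * Uᵀ = 1) (hU' : Uᵀ * U = 1)
    (D : Matrix ι ι ℝ) : sphereZeroSet (U * D * Uᵀ) = (U *ᵥ ·) '' sphereZeroSet D := by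
  have hinv : Function.LeftInverse (Uᵀ *ᵥ ·) (U *ᵥ ·) := fun x => by simp [hU']
  have hinv' : Function.RightInverse (Uᵀ *ᵥ ·) (U *ᵥ ·) := fun x => by simp [hU]
  rw [image_eq_preimage_of_inverse hinv hinv']
  ext x
  have hx := dotProduct_conj_mulVec U 1 x
  rw [mul_one, hU, one_mulVec, one_mulVec] at hx
  simp only [sphereZeroSet, mem_ofPred_eq, mem_preimage, hx, dotProduct_conj_mulVec]

theorem isPathConnectedUpToSign_sphereZeroSet (hι : 3 ≤ Fintype.card ι) {B : Matrix ι ι ℝ}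
    (hB : B.IsSymm) : IsPathConnectedUpToSign (sphereZeroSet B) := by
  have hB' : B.IsHermitian := hB
  set U : Matrix ι ι ℝ := (hB'.eigenvectorUnitary : Matrix ι ι ℝ)
  have hU : U * Uᵀ = 1 := Unitary.coe_mul_star_self hB'.eigenvectorUnitary
  have hU' : Uᵀ * U = 1 := Unitary.coe_star_mul_self hB'.eigenvectorUnitary
  have hspec : B = U * diagonal hB'.eigenvalues * Uᵀ := hB'.spectral_theorem
  rw [hspec, sphereZeroSet_conj hU hU']
  exact (isPathConnectedUpToSign_diagonal hι _).image
    (continuous_const.matrix_mulVec continuous_id) fun x => mulVec_neg x U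

theorem convex_jointQuadForm_image_sphere (hι : 3 ≤ Fintype.card ι) {A₁ A₂ : Matrix ι ι ℝ}
    (hA₁ : A₁.IsSymm) (hA₂ : A₂.IsSymm) :
    Convex ℝ (jointQuadForm A₁ A₂ '' {x | x ⬝ᵥ x = 1}) := by
  rw [convex_iff_segment_subset]
  rintro _ ⟨u, hu, rfl⟩ _ ⟨v, hv, rfl⟩
  set p := jointQuadForm A₁ A₂ u
  set q := jointQuadForm A₁ A₂ v
  -- on the unit sphere, the quadratic form of `B` vanishes exactly on the preimage of the line `pq`
  set B : Matrix ι ι ℝ := (q.1 - p.1) • A₂ - (q.2 - p.2) • A₁ -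
    ((q.1 - p.1) * p.2 - (q.2 - p.2) * p.1) • 1
  have hB : B.IsSymm := ((hA₂.smul _).sub (hA₁.smul _)).sub (isSymm_one.smul _)
  have hBx : ∀ x, x ⬝ᵥ x = 1 → x ⬝ᵥ B *ᵥ x = (q.1 - p.1) * ((jointQuadForm A₁ A₂ x).2 - p.2)
      - (q.2 - p.2) * ((jointQuadForm A₁ A₂ x).1 - p.1) := fun x hx => by
    simp only [B, sub_mulVec, smul_mulVec, one_mulVec, dotProduct_sub, dotProduct_smul, hx,
      jointQuadForm, smul_eq_mul]
    ring
  have hC := (isPathConnectedUpToSign_sphereZeroSet hι hB).isPreconnected_image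
    (continuous_jointQuadForm A₁ A₂) (jointQuadForm_neg A₁ A₂)
  refine (segment_subset_of_isPreconnected hC ⟨u, ⟨hu, ?_⟩, rfl⟩ ⟨v, ⟨hv, ?_⟩, rfl⟩ ?_).trans
    (image_mono fun x hx => hx.1)
  · rw [hBx u hu]; ring
  · rw [hBx v hv]; ring
  · rintro _ ⟨x, hx, rfl⟩
    exact sub_eq_zero.1 ((hBx x hx.1).symm.trans hx.2)

theorem jointQuadForm_image_shell [Nonempty ι] (A₁ A₂ : Matrix ι ι ℝ) (T : Set ℝ) :
    jointQuadForm A₁ A₂ '' {x | x ⬝ᵥ x ∈ T} =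
      (T ∩ Ici 0) • jointQuadForm A₁ A₂ '' {x | x ⬝ᵥ x = 1} := by
  ext p
  simp only [mem_smul, mem_image, mem_ofPred_eq, mem_inter_iff, mem_Ici]
  constructor
  · rintro ⟨x, hx, rfl⟩
    have hx0 : 0 ≤ x ⬝ᵥ x := Finset.sum_nonneg fun i _ => mul_self_nonneg (x i)
    rcases hx0.eq_or_lt with h | h
    · obtain ⟨i⟩ := ‹Nonempty ι›
      refine ⟨0, ⟨h ▸ hx, le_rfl⟩, _, ⟨Pi.single i 1, by simp, rfl⟩, ?_⟩
      simp [dotProduct_self_eq_zero.1 h.symm, jointQuadForm, Prod.zero_eq_mk]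
    · refine ⟨x ⬝ᵥ x, ⟨hx, h.le⟩, _, ⟨(√(x ⬝ᵥ x))⁻¹ • x, ?_, rfl⟩, ?_⟩
      · rw [smul_dotProduct_smul, inv_pow, Real.sq_sqrt h.le, inv_mul_cancel₀ h.ne']
      · rw [jointQuadForm_smul, smul_smul, inv_pow, Real.sq_sqrt h.le, mul_inv_cancel₀ h.ne',
          one_smul]
  · rintro ⟨t, ⟨ht, ht0⟩, _, ⟨u, hu, rfl⟩, rfl⟩
    refine ⟨√t • u, ?_, ?_⟩
    · rwa [smul_dotProduct_smul, Real.sq_sqrt ht0, hu, mul_one]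
    · rw [jointQuadForm_smul, Real.sq_sqrt ht0]

theorem convex_jointQuadForm_image_shell (hι : 3 ≤ Fintype.card ι) {A₁ A₂ : Matrix ι ι ℝ}
    (hA₁ : A₁.IsSymm) (hA₂ : A₂.IsSymm) {T : Set ℝ} (hT : Convex ℝ T) :
    Convex ℝ (jointQuadForm A₁ A₂ '' {x | x ⬝ᵥ x ∈ T}) := by
  have : Nonempty ι := Fintype.card_pos_iff.1 (by omega)
  rw [jointQuadForm_image_shell]
  exact (hT.inter (convex_Ici 0)).smul_set_of_nonneg inter_subset_right
    (convex_jointQuadForm_image_sphere hι hA₁ hA₂)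

end QuadraticForms

theorem annulus_brickman_general (n : ℕ) (hn : 3 ≤ n)
    (A₁ A₂ : Matrix (Fin n) (Fin n) ℝ) (hA₁ : A₁.IsSymm) (hA₂ : A₂.IsSymm)
    (α₁ α₂ : ℝ) :
    let W₃ : Set (ℝ × ℝ) :=
      {p | ∃ x : Fin n → ℝ, α₁ ≤ x ⬝ᵥ x ∧ x ⬝ᵥ x ≤ α₂ ∧
        p = (x ⬝ᵥ A₁.mulVec x, x ⬝ᵥ A₂.mulVec x)}
    Convex ℝ W₃ ∧ IsCompact W₃ := by
  intro W₃
  have hW₃ : W₃ = jointQuadForm A₁ A₂ '' {x | x ⬝ᵥ x ∈ Icc α₁ α₂} := by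
    ext p
    simp [W₃, jointQuadForm, eq_comm, and_assoc]
  rw [hW₃]
  exact ⟨convex_jointQuadForm_image_shell (by rwa [Fintype.card_fin]) hA₁ hA₂ (convex_Icc α₁ α₂),
    (isCompact_setOf_dotProduct_self_mem_Icc α₁ α₂).image (continuous_jointQuadForm A₁ A₂)⟩

theorem annulus_brickman (n : ℕ) (hn : 3 ≤ n)
    (A₁ A₂ : Matrix (Fin n) (Fin n) ℝ) (hA₁ : A₁.IsSymm) (hA₂ : A₂.IsSymm)
    (α₁ α₂ : ℝ) (h0 : 0 < α₁) (h12 : α₁ < α₂) :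
    let W₃ : Set (ℝ × ℝ) :=
      {p | ∃ x : Fin n → ℝ, α₁ ≤ x ⬝ᵥ x ∧ x ⬝ᵥ x ≤ α₂ ∧
        p = (x ⬝ᵥ A₁.mulVec x, x ⬝ᵥ A₂.mulVec x)}
    Convex ℝ W₃ ∧ IsCompact W₃ :=
  annulus_brickman_general n hn A₁ A₂ hA₁ hA₂ α₁ α₂
end

section
/- Let n ≥ 3, let A, B, C be real symmetric n×n matrices with C positive definite, and 0 < α < β < ∞. Then the set Ω = {(xᵀAx, xᵀBx) : α ≤ xᵀCx ≤ β, x ∈ ℝⁿ} ⊂ ℝ² is convex and compact. -/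
open Matrix Set

namespace OmegaAux

variable {n : ℕ}

/-- the quadratic form of a matrix -/
def qf (M : Matrix (Fin n) (Fin n) ℝ) (x : Fin n → ℝ) : ℝ := x ⬝ᵥ M.mulVec x

/-- sphere-quadric intersection, diagonal case -/
def Sd (μ : Fin n → ℝ) (c : ℝ) : Set (Fin n → ℝ) :=
  {z | ∑ i, z i ^ 2 = 1 ∧ ∑ i, μ i * z i ^ 2 = c}

lemma two_point_sum {p q : Fin n} (hpq : p ≠ q) (F : Fin n → ℝ)
    (hF : ∀ m, m ≠ p → m ≠ q → F m = 0) : ∑ m, F m = F p + F q := by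
  rw [show F p + F q = ∑ m ∈ ({p, q} : Finset (Fin n)), F m by
    rw [Finset.sum_pair hpq]]
  exact (Finset.sum_subset (Finset.subset_univ _) (by
    intro m _ hm
    simp only [Finset.mem_insert, Finset.mem_singleton, not_or] at hm
    exact hF m hm.1 hm.2)).symm

lemma mem_Sd_of_sq_eq {μ : Fin n → ℝ} {c : ℝ} {z z' : Fin n → ℝ}
    (h : ∀ i, z' i ^ 2 = z i ^ 2) (hz : z ∈ Sd μ c) : z' ∈ Sd μ c := by
  obtain ⟨h1, h2⟩ := hz
  constructor
  · rw [← h1]; exact Finset.sum_congr rfl fun i _ => h i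
  · rw [← h2]; exact Finset.sum_congr rfl fun i _ => by rw [h i]

lemma seg_joined {μ : Fin n → ℝ} {c : ℝ} {x y : Fin n → ℝ}
    (hx : x ∈ Sd μ c) (hy : y ∈ Sd μ c) (h : ∀ i, 0 ≤ x i * y i) :
    JoinedIn (Sd μ c) x y := by
  classical
  set ε : Fin n → ℝ := fun i => if 0 ≤ x i + y i then 1 else -1 with hε
  have hε2 : ∀ i, ε i ^ 2 = 1 := by
    intro i; by_cases hi : 0 ≤ x i + y i <;> simp [hε, hi]
  set f : ℝ → Fin n → ℝ :=
    fun s i => ε i * Real.sqrt ((1 - s) * x i ^ 2 + s * y i ^ 2) with hf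
  have hcont : Continuous f := by
    apply continuous_pi
    intro i
    exact continuous_const.mul (Real.continuous_sqrt.comp (by fun_prop))
  have harg : ∀ s : ℝ, s ∈ Set.Icc (0:ℝ) 1 → ∀ i,
      0 ≤ (1 - s) * x i ^ 2 + s * y i ^ 2 := by
    intro s hs i
    exact add_nonneg (mul_nonneg (by linarith [hs.2]) (sq_nonneg _))
      (mul_nonneg hs.1 (sq_nonneg _))
  have hsq : ∀ s : ℝ, s ∈ Set.Icc (0:ℝ) 1 → ∀ i,
      f s i ^ 2 = (1 - s) * x i ^ 2 + s * y i ^ 2 := by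
    intro s hs i
    rw [hf]
    simp only [mul_pow, hε2 i, one_mul]
    exact Real.sq_sqrt (harg s hs i)
  have hmem : ∀ s : ℝ, s ∈ Set.Icc (0:ℝ) 1 → f s ∈ Sd μ c := by
    intro s hs
    constructor
    · have : ∑ i, f s i ^ 2 = ∑ i, ((1 - s) * x i ^ 2 + s * y i ^ 2) :=
        Finset.sum_congr rfl fun i _ => hsq s hs i
      rw [this, Finset.sum_add_distrib, ← Finset.mul_sum, ← Finset.mul_sum,
        hx.1, hy.1]
      ring
    · have : ∑ i, μ i * f s i ^ 2
          = ∑ i, ((1 - s) * (μ i * x i ^ 2) + s * (μ i * y i ^ 2)) :=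
        Finset.sum_congr rfl fun i _ => by rw [hsq s hs i]; ring
      rw [this, Finset.sum_add_distrib, ← Finset.mul_sum, ← Finset.mul_sum,
        hx.2, hy.2]
      ring
  have hf0 : f 0 = x := by
    funext i
    rw [hf]
    simp only [sub_zero, one_mul, zero_mul, add_zero, Real.sqrt_sq_eq_abs]
    rcases lt_trichotomy (x i) 0 with hlt | heq | hgt
    · have hy' : y i ≤ 0 := by nlinarith [h i]
      have : ¬ (0 ≤ x i + y i) := by
        by_contra hc
        nlinarith
      simp [hε, this, abs_of_neg hlt]
    · simp [heq]
    · have hy' : 0 ≤ y i := by nlinarith [h i]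
      have : 0 ≤ x i + y i := by linarith
      simp [hε, this, abs_of_pos hgt]
  have hf1 : f 1 = y := by
    funext i
    rw [hf]
    simp only [sub_self, zero_mul, one_mul, zero_add, Real.sqrt_sq_eq_abs]
    rcases lt_trichotomy (y i) 0 with hlt | heq | hgt
    · have hx' : x i ≤ 0 := by nlinarith [h i]
      have : ¬ (0 ≤ x i + y i) := by
        by_contra hc
        nlinarith
      simp [hε, this, abs_of_neg hlt]
    · simp [heq]
    · have hx' : 0 ≤ x i := by nlinarith [h i]
      have : 0 ≤ x i + y i := by linarith
      simp [hε, this, abs_of_pos hgt]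
  refine ⟨⟨⟨fun t => f t, hcont.comp continuous_subtype_val⟩, ?_, ?_⟩, ?_⟩
  · simpa using hf0
  · simpa using hf1
  · intro t
    exact hmem t t.2


lemma flip_joined {μ : Fin n → ℝ} {c : ℝ} {z : Fin n → ℝ} (i₀ : Fin n)
    (hst : ∃ w ∈ Sd μ c, w i₀ = 0) (hz : z ∈ Sd μ c) :
    JoinedIn (Sd μ c) z (Function.update z i₀ (-z i₀)) := by
  classical
  obtain ⟨w, hw, hwi⟩ := hst
  set z' : Fin n → ℝ := fun j => (if 0 ≤ z j then 1 else -1) * |w j| with hz'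
  have hsq : ∀ j, z' j ^ 2 = w j ^ 2 := by
    intro j
    by_cases hj : 0 ≤ z j <;> simp [hz', hj, mul_pow, sq_abs]
  have hz'mem : z' ∈ Sd μ c := mem_Sd_of_sq_eq hsq hw
  have hupd : Function.update z i₀ (-z i₀) ∈ Sd μ c := by
    refine mem_Sd_of_sq_eq (fun j => ?_) hz
    by_cases hj : j = i₀
    · subst hj; simp
    · simp [hj]
  have h1 : JoinedIn (Sd μ c) z z' := by
    refine seg_joined hz hz'mem fun j => ?_
    by_cases hj : 0 ≤ z j
    · simp only [hz', hj, if_pos, one_mul]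
      exact mul_nonneg hj (abs_nonneg _)
    · push_neg at hj
      simp only [hz', if_neg (not_le.mpr hj)]
      have : z j * (-1 * |w j|) = (-z j) * |w j| := by ring
      rw [this]
      exact mul_nonneg (by linarith) (abs_nonneg _)
  have h2 : JoinedIn (Sd μ c) z' (Function.update z i₀ (-z i₀)) := by
    refine seg_joined hz'mem hupd fun j => ?_
    by_cases hj : j = i₀
    · subst hj
      simp [hz', hwi]
    · rw [Function.update_of_ne hj]
      by_cases hj' : 0 ≤ z j
      · simp only [hz', if_pos hj', one_mul]
        exact mul_nonneg (abs_nonneg _) hj'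
      · push_neg at hj'
        simp only [hz', if_neg (not_le.mpr hj')]
        have : -1 * |w j| * z j = |w j| * (-z j) := by ring
        rw [this]
        exact mul_nonneg (abs_nonneg _) (by linarith)
  exact h1.trans h2

lemma multi_flip {μ : Fin n → ℝ} {c : ℝ} (T : Finset (Fin n))
    (hT : ∀ i ∈ T, ∃ w ∈ Sd μ c, w i = 0) :
    ∀ z ∈ Sd μ c, JoinedIn (Sd μ c) z (fun i => if i ∈ T then -z i else z i) := by
  classical
  induction T using Finset.induction_on with
  | empty => intro z hz; simpa using JoinedIn.refl hz
  | @insert a T ha ih =>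
    intro z hz
    have hT' : ∀ i ∈ T, ∃ w ∈ Sd μ c, w i = 0 := fun i hi =>
      hT i (Finset.mem_insert_of_mem hi)
    have h1 := ih hT' z hz
    set z₁ : Fin n → ℝ := fun i => if i ∈ T then -z i else z i with hz₁
    have hz₁mem : z₁ ∈ Sd μ c := h1.target_mem
    have h2 := flip_joined a (hT a (Finset.mem_insert_self a T)) hz₁mem
    have heq : Function.update z₁ a (-z₁ a)
        = fun i => if i ∈ insert a T then -z i else z i := by
      funext i
      by_cases hia : i = a
      · subst hia
        simp [hz₁, ha, Finset.mem_insert_self]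
      · rw [Function.update_of_ne hia]
        simp only [hz₁, Finset.mem_insert]
        by_cases hiT : i ∈ T <;> simp [hiT, hia]
    rw [heq] at h2
    exact h1.trans h2


lemma onesided {μ : Fin n → ℝ} {c : ℝ} {x : Fin n → ℝ} (hx : x ∈ Sd μ c)
    (i : Fin n) (hi : ¬ ∃ w ∈ Sd μ c, w i = 0) :
    (∀ m, m ≠ i → μ m < c) ∨ (∀ m, m ≠ i → c < μ m) := by
  classical
  by_contra hcon
  push_neg at hcon
  obtain ⟨⟨p, hpi, hpc⟩, ⟨q, hqi, hqc⟩⟩ := hcon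
  -- c ≤ μ p, μ q ≤ c
  apply hi
  rcases eq_or_lt_of_le hqc with hq | hq
  · -- μ q = c : take w = indicator q
    refine ⟨fun m => if m = q then 1 else 0, ⟨?_, ?_⟩, by simp [Ne.symm hqi]⟩
    · rw [Finset.sum_congr rfl (fun m _ => show (if m = q then (1:ℝ) else 0) ^ 2
        = if m = q then 1 else 0 by split <;> norm_num)]
      simp
    · rw [Finset.sum_congr rfl (fun m _ => show μ m * (if m = q then (1:ℝ) else 0) ^ 2
        = if m = q then μ q else 0 by split <;> simp_all)]
      simp [hq]
  · -- μ q < c ≤ μ p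
    have hpq : q ≠ p := fun h => by rw [h] at hq; linarith
    set t : ℝ := (c - μ q) / (μ p - μ q) with ht
    have hden : 0 < μ p - μ q := by linarith
    have ht0 : 0 < t := div_pos (by linarith) hden
    have ht1 : t ≤ 1 := by
      rw [div_le_one hden]; linarith
    set w : Fin n → ℝ := fun m => if m = p then Real.sqrt t
      else if m = q then Real.sqrt (1 - t) else 0 with hwdef
    have hwsq : ∀ m, w m ^ 2 = if m = p then t else if m = q then 1 - t else 0 := by
      intro m
      rw [hwdef]
      by_cases h1 : m = p
      · simp [h1, Real.sq_sqrt ht0.le]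
      · by_cases h2 : m = q <;>
          simp [h1, h2, hpq, Real.sq_sqrt (by linarith : (0:ℝ) ≤ 1 - t)]
    refine ⟨w, ⟨?_, ?_⟩, by simp [hwdef, Ne.symm hpi, Ne.symm hqi]⟩
    · rw [Finset.sum_congr rfl (fun m _ => hwsq m),
        two_point_sum hpq.symm _ (fun m h1 h2 => by simp [h1, h2])]
      simp [hpq]
    · rw [Finset.sum_congr rfl (fun m _ => by rw [hwsq m]),
        two_point_sum hpq.symm (fun m => μ m * _) (fun m h1 h2 => by simp [h1, h2])]
      rw [if_pos rfl, if_neg hpq, if_pos rfl]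
      have htt : t * (μ p - μ q) = c - μ q := by
        rw [ht]; field_simp
      nlinarith [htt]
  
lemma not_two_unflippable {μ : Fin n → ℝ} {c : ℝ} {x : Fin n → ℝ} (hn : 3 ≤ n)
    (hx : x ∈ Sd μ c) {i j : Fin n} (hij : i ≠ j)
    (hi : ¬ ∃ w ∈ Sd μ c, w i = 0) (hj : ¬ ∃ w ∈ Sd μ c, w j = 0) : False := by
  classical
  -- there is k distinct from i and j
  have hcard : ({i, j} : Finset (Fin n)).card < n := by
    calc ({i, j} : Finset (Fin n)).card ≤ 2 := Finset.card_insert_le _ _ |>.trans (by simp)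
    _ < n := by omega
  obtain ⟨k, hk⟩ : ∃ k : Fin n, k ∉ ({i, j} : Finset (Fin n)) := by
    by_contra hco
    push_neg at hco
    have := Finset.card_le_card (fun m (_ : m ∈ Finset.univ) => hco m)
    simp at this
    omega
  simp only [Finset.mem_insert, Finset.mem_singleton, not_or] at hk
  -- strict inequality trick : ∑ μ m x m ^2 = c with ∑ x m ^2 = 1
  have hxlt : (∀ m, μ m < c) → False := by
    intro hall
    obtain ⟨m₀, hm₀⟩ : ∃ m, x m ≠ 0 := by
      by_contra hco
      push_neg at hco
      have : ∑ i, x i ^ 2 = 0 :=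
        Finset.sum_eq_zero fun m _ => by rw [hco m]; ring
      rw [hx.1] at this; norm_num at this
    have hlt : ∑ m, μ m * x m ^ 2 < ∑ m, c * x m ^ 2 := by
      apply Finset.sum_lt_sum
      · intro m _
        exact mul_le_mul_of_nonneg_right (hall m).le (sq_nonneg _)
      · exact ⟨m₀, Finset.mem_univ _,
          (mul_lt_mul_of_pos_right (hall m₀) (by positivity))⟩
    rw [hx.2, ← Finset.mul_sum, hx.1, mul_one] at hlt
    exact lt_irrefl _ hlt
  have hxgt : (∀ m, c < μ m) → False := by
    intro hall
    obtain ⟨m₀, hm₀⟩ : ∃ m, x m ≠ 0 := by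
      by_contra hco
      push_neg at hco
      have : ∑ i, x i ^ 2 = 0 :=
        Finset.sum_eq_zero fun m _ => by rw [hco m]; ring
      rw [hx.1] at this; norm_num at this
    have hlt : ∑ m, c * x m ^ 2 < ∑ m, μ m * x m ^ 2 := by
      apply Finset.sum_lt_sum
      · intro m _
        exact mul_le_mul_of_nonneg_right (hall m).le (sq_nonneg _)
      · exact ⟨m₀, Finset.mem_univ _,
          (mul_lt_mul_of_pos_right (hall m₀) (by positivity))⟩
    rw [hx.2, ← Finset.mul_sum, hx.1, mul_one] at hlt
    exact lt_irrefl _ hlt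
  rcases onesided hx i hi with hI | hI <;> rcases onesided hx j hj with hJ | hJ
  · apply hxlt
    intro m
    by_cases hmi : m = i
    · subst hmi; exact hJ m hij
    · exact hI m hmi
  · exact absurd (hJ k hk.2) (not_lt.mpr (hI k hk.1).le)
  · exact absurd (hI k hk.1) (not_lt.mpr (hJ k hk.2).le)
  · apply hxgt
    intro m
    by_cases hmi : m = i
    · subst hmi; exact hJ m hij
    · exact hI m hmi

lemma conn_diag {μ : Fin n → ℝ} {c : ℝ} (hn : 3 ≤ n) {x y : Fin n → ℝ}
    (hx : x ∈ Sd μ c) (hy : y ∈ Sd μ c) :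
    JoinedIn (Sd μ c) x y ∨ JoinedIn (Sd μ c) x (-y) := by
  classical
  set M : Finset (Fin n) := Finset.univ.filter (fun i => x i * y i < 0) with hM
  set M' : Finset (Fin n) := Finset.univ.filter (fun i => 0 < x i * y i) with hM'
  by_cases hMf : ∀ i ∈ M, ∃ w ∈ Sd μ c, w i = 0
  · left
    have h1 := multi_flip M hMf y hy
    refine (seg_joined hx h1.target_mem fun i => ?_).trans h1.symm
    by_cases hi : i ∈ M
    · simp only [if_pos hi]
      have : x i * y i < 0 := by simpa [hM] using hi
      nlinarith
    · simp only [if_neg hi]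
      have : ¬ (x i * y i < 0) := by simpa [hM] using hi
      linarith
  · right
    push_neg at hMf
    obtain ⟨i₀, hi₀M, hi₀⟩ := hMf
    have hi₀' : ¬ ∃ w ∈ Sd μ c, w i₀ = 0 := by push_neg; exact hi₀
    have hi₀lt : x i₀ * y i₀ < 0 := by simpa [hM] using hi₀M
    have hM'f : ∀ i ∈ M', ∃ w ∈ Sd μ c, w i = 0 := by
      intro j hj
      by_contra hjc
      have hjgt : 0 < x j * y j := by simpa [hM'] using hj
      exact not_two_unflippable hn hx
        (show i₀ ≠ j from fun h => by rw [h] at hi₀lt; linarith) hi₀' hjc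
    have hny : -y ∈ Sd μ c := mem_Sd_of_sq_eq (fun i => by simp) hy
    have h1 := multi_flip M' hM'f (-y) hny
    refine (seg_joined hx h1.target_mem fun i => ?_).trans h1.symm
    by_cases hi : i ∈ M'
    · simp only [if_pos hi, Pi.neg_apply, neg_neg]
      have : 0 < x i * y i := by simpa [hM'] using hi
      linarith
    · simp only [if_neg hi, Pi.neg_apply]
      have : ¬ (0 < x i * y i) := by simpa [hM'] using hi
      nlinarith


lemma qf_smul (M : Matrix (Fin n) (Fin n) ℝ) (t : ℝ) (v : Fin n → ℝ) :
    qf M (t • v) = t ^ 2 * qf M v := by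
  simp only [qf, Matrix.mulVec_smul, smul_dotProduct, dotProduct_smul, smul_eq_mul]
  ring


lemma dot_tr (M : Matrix (Fin n) (Fin n) ℝ) (x y : Fin n → ℝ) :
    (M *ᵥ x) ⬝ᵥ y = x ⬝ᵥ (Mᵀ *ᵥ y) := by
  rw [Matrix.dotProduct_mulVec, Matrix.vecMul_transpose, dotProduct_comm]

lemma joined_map {X Y : Type*} [TopologicalSpace X] [TopologicalSpace Y]
    {s : Set X} {t : Set Y} {f : X → Y} (hf : Continuous f)
    (himg : ∀ w ∈ s, f w ∈ t) {u v : X} (h : JoinedIn s u v) :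
    JoinedIn t (f u) (f v) := by
  obtain ⟨γ, hγ⟩ := h
  exact ⟨γ.map hf, fun τ => by simpa using himg _ (hγ τ)⟩

lemma conn_general (hn : 3 ≤ n) {g : Matrix (Fin n) (Fin n) ℝ} (hg : g.IsSymm)
    {c : ℝ} {x y : Fin n → ℝ}
    (hx : x ∈ {z : Fin n → ℝ | z ⬝ᵥ z = 1 ∧ qf g z = c})
    (hy : y ∈ {z : Fin n → ℝ | z ⬝ᵥ z = 1 ∧ qf g z = c}) :
    JoinedIn {z : Fin n → ℝ | z ⬝ᵥ z = 1 ∧ qf g z = c} x y ∨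
      JoinedIn {z : Fin n → ℝ | z ⬝ᵥ z = 1 ∧ qf g z = c} x (-y) := by
  classical
  set S := {z : Fin n → ℝ | z ⬝ᵥ z = 1 ∧ qf g z = c} with hS
  have hH : g.IsHermitian := by
    rw [Matrix.IsHermitian, conjTranspose_eq_transpose_of_trivial]; exact hg
  set V : Matrix (Fin n) (Fin n) ℝ := (hH.eigenvectorUnitary : Matrix (Fin n) (Fin n) ℝ)
    with hV
  set μ := hH.eigenvalues with hμ
  have hspec : g = V * diagonal μ * Vᵀ := by
    have := hH.spectral_theorem
    simpa [Matrix.star_eq_conjTranspose, conjTranspose_eq_transpose_of_trivial] using this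
  have hVV : Vᵀ * V = 1 := by
    have := Matrix.UnitaryGroup.star_mul_self hH.eigenvectorUnitary
    simpa [Matrix.star_eq_conjTranspose, conjTranspose_eq_transpose_of_trivial] using this
  have hVVt : V * Vᵀ = 1 := by
    have := (Matrix.mem_unitaryGroup_iff).mp hH.eigenvectorUnitary.2
    simpa [Matrix.star_eq_conjTranspose, conjTranspose_eq_transpose_of_trivial] using this
  set T : (Fin n → ℝ) → (Fin n → ℝ) := fun z => Vᵀ *ᵥ z with hT
  have hVT : ∀ z, V *ᵥ T z = z := by
    intro z
    show V *ᵥ (Vᵀ *ᵥ z) = z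
    rw [mulVec_mulVec, hVVt, one_mulVec]
  have hTV : ∀ w, T (V *ᵥ w) = w := by
    intro w
    show Vᵀ *ᵥ (V *ᵥ w) = w
    rw [mulVec_mulVec, hVV, one_mulVec]
  have key1 : ∀ z : Fin n → ℝ, ∑ i, T z i ^ 2 = z ⬝ᵥ z := by
    intro z
    have : (T z) ⬝ᵥ (T z) = z ⬝ᵥ z := by
      rw [hT, dot_tr, transpose_transpose, mulVec_mulVec, hVVt, one_mulVec]
    rw [← this, dotProduct]
    exact Finset.sum_congr rfl fun i _ => (sq (T z i)).symm ▸ by ring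
  have key2 : ∀ z : Fin n → ℝ, ∑ i, μ i * T z i ^ 2 = qf g z := by
    intro z
    have h1 : qf g z = z ⬝ᵥ (V *ᵥ (diagonal μ *ᵥ (Vᵀ *ᵥ z))) := by
      rw [qf, hspec, mulVec_mulVec, mulVec_mulVec]
    have h2 : z ⬝ᵥ (V *ᵥ (diagonal μ *ᵥ (Vᵀ *ᵥ z)))
        = (T z) ⬝ᵥ (diagonal μ *ᵥ (T z)) := by
      rw [dotProduct_comm, dot_tr, dotProduct_comm, hT]
    rw [h1, h2, dotProduct]
    refine Finset.sum_congr rfl fun i _ => ?_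
    rw [Matrix.mulVec_diagonal]
    ring
  have hmemiff : ∀ z : Fin n → ℝ, z ∈ S ↔ T z ∈ Sd μ c := by
    intro z
    rw [hS, Sd]
    simp only [Set.mem_setOf_eq, key1, key2]
  have hback : ∀ w ∈ Sd μ c, V *ᵥ w ∈ S := by
    intro w hw
    rw [hmemiff, hTV]
    exact hw
  have hcont : Continuous (fun w : Fin n → ℝ => V *ᵥ w) :=
    V.mulVecLin.continuous_of_finiteDimensional
  rcases conn_diag hn ((hmemiff x).mp hx) ((hmemiff y).mp hy) with h | h
  · left
    have := joined_map hcont hback h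
    rwa [hVT, hVT] at this
  · right
    have := joined_map hcont hback h
    rwa [hVT, Matrix.mulVec_neg, hVT] at this

lemma qf_lin (A B : Matrix (Fin n) (Fin n) ℝ) (a b : ℝ) (z : Fin n → ℝ) :
    qf (a • A + b • B) z = a * qf A z + b * qf B z := by
  simp [qf, Matrix.add_mulVec, Matrix.smul_mulVec, dotProduct_add,
    dotProduct_smul, smul_eq_mul]

lemma qf_neg (M : Matrix (Fin n) (Fin n) ℝ) (z : Fin n → ℝ) : qf M (-z) = qf M z := by
  simp [qf, Matrix.mulVec_neg]

lemma qf_cont (M : Matrix (Fin n) (Fin n) ℝ) : Continuous (qf M) := by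
  unfold qf
  simp only [dotProduct, Matrix.mulVec]
  fun_prop

/-- Brickman's theorem : joint image of the unit sphere under two quadratic forms -/
theorem brickman (hn : 3 ≤ n) {A B : Matrix (Fin n) (Fin n) ℝ}
    (hA : A.IsSymm) (hB : B.IsSymm) :
    Convex ℝ {p : ℝ × ℝ | ∃ u : Fin n → ℝ, u ⬝ᵥ u = 1 ∧ p = (qf A u, qf B u)} := by
  set W := {p : ℝ × ℝ | ∃ u : Fin n → ℝ, u ⬝ᵥ u = 1 ∧ p = (qf A u, qf B u)} with hW
  intro p hp q hq a b ha hb hab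
  obtain ⟨x, hx1, hpx⟩ := hp
  obtain ⟨y, hy1, hqy⟩ := hq
  by_cases hpq : p = q
  · subst hpq
    have : a • p + b • p = p := by rw [← add_smul, hab, one_smul]
    rw [this]
    exact ⟨x, hx1, hpx⟩
  have hp1 : p.1 = qf A x := by rw [hpx]
  have hp2 : p.2 = qf B x := by rw [hpx]
  have hq1 : q.1 = qf A y := by rw [hqy]
  have hq2 : q.2 = qf B y := by rw [hqy]
  obtain ⟨d, hd⟩ : ∃ d : ℝ × ℝ, d = p - q := ⟨_, rfl⟩
  have hdne : d.1 ≠ 0 ∨ d.2 ≠ 0 := by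
    by_contra hco
    push_neg at hco
    apply hpq
    have : d = 0 := Prod.ext hco.1 hco.2
    rw [this] at hd
    exact (sub_eq_zero.mp hd.symm)
  obtain ⟨g, hg⟩ : ∃ g : Matrix (Fin n) (Fin n) ℝ, g = d.2 • A + (-d.1) • B := ⟨_, rfl⟩
  have hgsymm : g.IsSymm := by
    rw [hg, Matrix.IsSymm, Matrix.transpose_add, Matrix.transpose_smul,
      Matrix.transpose_smul, hA.eq, hB.eq]
  obtain ⟨c, hc⟩ : ∃ c : ℝ, c = d.2 * p.1 + (-d.1) * p.2 := ⟨_, rfl⟩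
  have hgx : qf g x = c := by
    rw [hg, qf_lin, hc, hp1, hp2]
  have hgyq : d.2 * q.1 + (-d.1) * q.2 = c := by
    rw [hc, hd]
    simp only [Prod.fst_sub, Prod.snd_sub]
    ring
  have hgy : qf g y = c := by
    rw [hg, qf_lin, ← hgyq, hq1, hq2]
  have hxS : x ∈ {z : Fin n → ℝ | z ⬝ᵥ z = 1 ∧ qf g z = c} := ⟨hx1, hgx⟩
  have hyS : y ∈ {z : Fin n → ℝ | z ⬝ᵥ z = 1 ∧ qf g z = c} := ⟨hy1, hgy⟩
  obtain ⟨y', hjoin, hy'A, hy'B⟩ :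
      ∃ y', JoinedIn {z : Fin n → ℝ | z ⬝ᵥ z = 1 ∧ qf g z = c} x y' ∧
        qf A y' = qf A y ∧ qf B y' = qf B y := by
    rcases conn_general hn hgsymm hxS hyS with h | h
    · exact ⟨y, h, rfl, rfl⟩
    · exact ⟨-y, h, qf_neg A y, qf_neg B y⟩
  obtain ⟨γ, hγ⟩ := hjoin
  obtain ⟨φ, hφ⟩ : ∃ φ : ℝ → ℝ,
      φ = fun t => d.1 * qf A (γ.extend t) + d.2 * qf B (γ.extend t) := ⟨_, rfl⟩
  have hφcont : Continuous φ := by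
    rw [hφ]
    exact (continuous_const.mul ((qf_cont A).comp γ.continuous_extend)).add
      (continuous_const.mul ((qf_cont B).comp γ.continuous_extend))
  obtain ⟨v, hv⟩ : ∃ v : ℝ,
      v = a * (d.1 * p.1 + d.2 * p.2) + b * (d.1 * q.1 + d.2 * q.2) := ⟨_, rfl⟩
  have hφ0 : φ 0 = d.1 * p.1 + d.2 * p.2 := by
    rw [hφ]
    simp only [Path.extend_zero]
    rw [hp1, hp2]
  have hφ1 : φ 1 = d.1 * q.1 + d.2 * q.2 := by
    rw [hφ]
    simp only [Path.extend_one]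
    rw [hy'A, hy'B, hq1, hq2]
  have hvmem : v ∈ Set.uIcc (φ 0) (φ 1) := by
    rw [hφ0, hφ1, Set.mem_uIcc]
    have hP : a * (d.1 * p.1 + d.2 * p.2) + b * (d.1 * p.1 + d.2 * p.2)
        = d.1 * p.1 + d.2 * p.2 := by rw [← add_mul, hab, one_mul]
    have hQ : a * (d.1 * q.1 + d.2 * q.2) + b * (d.1 * q.1 + d.2 * q.2)
        = d.1 * q.1 + d.2 * q.2 := by rw [← add_mul, hab, one_mul]
    rcases le_total (d.1 * p.1 + d.2 * p.2) (d.1 * q.1 + d.2 * q.2) with h | h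
    · left
      constructor
      · linarith [mul_le_mul_of_nonneg_left h hb]
      · linarith [mul_le_mul_of_nonneg_left h ha]
    · right
      constructor
      · linarith [mul_le_mul_of_nonneg_left h ha]
      · linarith [mul_le_mul_of_nonneg_left h hb]
  obtain ⟨t, ht, hφt⟩ := intermediate_value_uIcc hφcont.continuousOn hvmem
  rw [Set.uIcc_of_le (by norm_num : (0:ℝ) ≤ 1)] at ht
  have hzS : γ.extend t ∈ {z : Fin n → ℝ | z ⬝ᵥ z = 1 ∧ qf g z = c} := by
    rw [Path.extend_apply γ ht]
    exact hγ _
  refine ⟨γ.extend t, hzS.1, ?_⟩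
  have hd2pos : 0 < d.1 ^ 2 + d.2 ^ 2 := by
    rcases hdne with h | h
    · rcases lt_or_gt_of_ne h with h' | h' <;> nlinarith [sq_nonneg d.2]
    · rcases lt_or_gt_of_ne h with h' | h' <;> nlinarith [sq_nonneg d.1]
  have e1 : d.2 * qf A (γ.extend t) + (-d.1) * qf B (γ.extend t) = c := by
    rw [← qf_lin A B d.2 (-d.1), ← hg]
    exact hzS.2
  have e2 : d.1 * qf A (γ.extend t) + d.2 * qf B (γ.extend t) = v := by
    rw [hφ] at hφt
    exact hφt
  have hcP : d.2 * p.1 + (-d.1) * p.2 = c := hc.symm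
  have hu1 : (d.1 ^ 2 + d.2 ^ 2) * (qf A (γ.extend t) - (a * p.1 + b * q.1)) = 0 := by
    linear_combination d.1 * e2 + d.2 * e1 + d.1 * hv - a * d.2 * hcP - b * d.2 * hgyq
      - c * d.2 * hab
  have hu2 : (d.1 ^ 2 + d.2 ^ 2) * (qf B (γ.extend t) - (a * p.2 + b * q.2)) = 0 := by
    linear_combination d.2 * e2 - d.1 * e1 + d.2 * hv + a * d.1 * hcP + b * d.1 * hgyq
      + c * d.1 * hab
  have hw1 : qf A (γ.extend t) = a * p.1 + b * q.1 := by
    have := (mul_eq_zero.mp hu1).resolve_left (ne_of_gt hd2pos)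
    linarith
  have hw2 : qf B (γ.extend t) = a * p.2 + b * q.2 := by
    have := (mul_eq_zero.mp hu2).resolve_left (ne_of_gt hd2pos)
    linarith
  apply Prod.ext
  · simp [hw1]
  · simp [hw2]


end OmegaAux

open OmegaAux

theorem omega_convex_compact (n : ℕ) (hn : 3 ≤ n)
    (A B C : Matrix (Fin n) (Fin n) ℝ) (hA : A.IsSymm) (hB : B.IsSymm)
    (hC : C.PosDef) (α β : ℝ) (h0 : 0 < α) (hab : α < β) :
    let Ω : Set (ℝ × ℝ) :=
      {p | ∃ x : Fin n → ℝ, α ≤ x ⬝ᵥ C.mulVec x ∧ x ⬝ᵥ C.mulVec x ≤ β ∧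
        p = (x ⬝ᵥ A.mulVec x, x ⬝ᵥ B.mulVec x)}
    Convex ℝ Ω ∧ IsCompact Ω := by
  intro Ω
  classical
  obtain ⟨R, hRR, hRsymm, hdetR⟩ :
      ∃ R : Matrix (Fin n) (Fin n) ℝ, R * R = C ∧ R.IsSymm ∧ IsUnit R.det := by
    open scoped MatrixOrder in
    refine ⟨CFC.sqrt C, CFC.sqrt_mul_sqrt_self C hC.posSemidef.nonneg, ?_, ?_⟩
    · rw [Matrix.IsSymm, ← conjTranspose_eq_transpose_of_trivial]
      open scoped MatrixOrder in
      exact (CFC.sqrt_nonneg C).posSemidef.1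
    · rw [isUnit_iff_ne_zero]
      intro h
      have : C.det = 0 := by
        open scoped MatrixOrder in
        rw [← CFC.sqrt_mul_sqrt_self C hC.posSemidef.nonneg, det_mul, h, mul_zero]
      exact (ne_of_gt hC.det_pos) this
  set A' : Matrix (Fin n) (Fin n) ℝ := R⁻¹ * A * R⁻¹ with hA'def
  set B' : Matrix (Fin n) (Fin n) ℝ := R⁻¹ * B * R⁻¹ with hB'def
  have hRinvsymm : (R⁻¹)ᵀ = R⁻¹ := by
    rw [Matrix.transpose_nonsing_inv, hRsymm.eq]
  have hA'symm : A'.IsSymm := by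
    rw [hA'def, Matrix.IsSymm, Matrix.transpose_mul, Matrix.transpose_mul,
      hRinvsymm, hA.eq, Matrix.mul_assoc]
  have hB'symm : B'.IsSymm := by
    rw [hB'def, Matrix.IsSymm, Matrix.transpose_mul, Matrix.transpose_mul,
      hRinvsymm, hB.eq, Matrix.mul_assoc]
  have hRinv1 : ∀ x : Fin n → ℝ, R⁻¹ *ᵥ (R *ᵥ x) = x := by
    intro x
    rw [mulVec_mulVec, Matrix.nonsing_inv_mul _ hdetR, one_mulVec]
  have hRinv2 : ∀ y : Fin n → ℝ, R *ᵥ (R⁻¹ *ᵥ y) = y := by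
    intro y
    rw [mulVec_mulVec, Matrix.mul_nonsing_inv _ hdetR, one_mulVec]
  have hqC : ∀ x : Fin n → ℝ, x ⬝ᵥ C *ᵥ x = (R *ᵥ x) ⬝ᵥ (R *ᵥ x) := by
    intro x
    rw [dot_tr, hRsymm.eq, mulVec_mulVec, hRR]
  have hqA : ∀ (M : Matrix (Fin n) (Fin n) ℝ) (x : Fin n → ℝ),
      qf (R⁻¹ * M * R⁻¹) (R *ᵥ x) = qf M x := by
    intro M x
    rw [qf, ← mulVec_mulVec, ← mulVec_mulVec, hRinv1, dot_tr, hRsymm.eq, mulVec_mulVec,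
      Matrix.mul_nonsing_inv _ hdetR, one_mulVec, qf]
  -- the sphere image
  set W : Set (ℝ × ℝ) := {p | ∃ u : Fin n → ℝ, u ⬝ᵥ u = 1 ∧ p = (qf A' u, qf B' u)}
    with hWdef
  have hΩ : Ω = (fun sw : ℝ × (ℝ × ℝ) => sw.1 • sw.2) '' (Set.Icc α β ×ˢ W) := by
    ext p
    constructor
    · rintro ⟨x, h1, h2, hp⟩
      have hs0 : 0 < x ⬝ᵥ C *ᵥ x := lt_of_lt_of_le h0 h1
      set s : ℝ := x ⬝ᵥ C *ᵥ x with hs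
      have hss : Real.sqrt s * Real.sqrt s = s := Real.mul_self_sqrt hs0.le
      have hsqrt0 : Real.sqrt s ≠ 0 := by positivity
      set u : (Fin n → ℝ) := (Real.sqrt s)⁻¹ • (R *ᵥ x) with hu
      have huu : u ⬝ᵥ u = 1 := by
        rw [hu, smul_dotProduct, dotProduct_smul, ← hqC x, smul_eq_mul, smul_eq_mul,
          ← mul_assoc, ← mul_inv, hss]
        exact inv_mul_cancel₀ (ne_of_gt hs0)
      refine ⟨(s, (qf A' u, qf B' u)), ⟨⟨h1, h2⟩, ⟨u, huu, rfl⟩⟩, ?_⟩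
      have hAx : qf A' u = s⁻¹ * qf A x := by
        rw [hu, qf_smul, ← hqA A x]
        rw [inv_pow, sq, hss]
      have hBx : qf B' u = s⁻¹ * qf B x := by
        rw [hu, qf_smul, ← hqA B x]
        rw [inv_pow, sq, hss]
      show s • (qf A' u, qf B' u) = p
      rw [hAx, hBx, hp, Prod.smul_mk, smul_eq_mul, smul_eq_mul, ← mul_assoc, ← mul_assoc,
        mul_inv_cancel₀ (ne_of_gt hs0), one_mul, one_mul]
      rfl
    · rintro ⟨⟨s, w⟩, ⟨⟨hs1, hs2⟩, ⟨u, huu, hw⟩⟩, hp⟩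
      have hs0 : 0 < s := lt_of_lt_of_le h0 hs1
      have hss : Real.sqrt s * Real.sqrt s = s := Real.mul_self_sqrt hs0.le
      refine ⟨R⁻¹ *ᵥ (Real.sqrt s • u), ?_, ?_, ?_⟩
      · rw [hqC, hRinv2, smul_dotProduct, dotProduct_smul, huu, smul_eq_mul, smul_eq_mul,
          mul_one, hss]
        exact hs1
      · rw [hqC, hRinv2, smul_dotProduct, dotProduct_smul, huu, smul_eq_mul, smul_eq_mul,
          mul_one, hss]
        exact hs2
      · have h1 : qf A (R⁻¹ *ᵥ (Real.sqrt s • u)) = s * qf A' u := by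
          rw [← hqA A (R⁻¹ *ᵥ (Real.sqrt s • u)), hRinv2, qf_smul, sq, hss]
        have h2 : qf B (R⁻¹ *ᵥ (Real.sqrt s • u)) = s * qf B' u := by
          rw [← hqA B (R⁻¹ *ᵥ (Real.sqrt s • u)), hRinv2, qf_smul, sq, hss]
        have hw' : w = (qf A' u, qf B' u) := hw
        show p = (qf A _, qf B _)
        rw [h1, h2, ← hp]
        show s • w = _
        rw [hw', Prod.smul_mk, smul_eq_mul, smul_eq_mul]
  have hWconv : Convex ℝ W := brickman hn hA'symm hB'symm
  rw [hΩ]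
  constructor
  · -- convexity
    rintro p ⟨⟨s₁, w₁⟩, ⟨⟨hs₁a, hs₁b⟩, hw₁⟩, rfl⟩ q ⟨⟨s₂, w₂⟩, ⟨⟨hs₂a, hs₂b⟩, hw₂⟩, rfl⟩
      a b ha hb hab2
    have hs₁0 : 0 < s₁ := lt_of_lt_of_le h0 hs₁a
    have hs₂0 : 0 < s₂ := lt_of_lt_of_le h0 hs₂a
    set s : ℝ := a * s₁ + b * s₂ with hs
    have hsa : α ≤ s := by nlinarith
    have hsb : s ≤ β := by nlinarith
    have hs0 : 0 < s := lt_of_lt_of_le h0 hsa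
    set w : ℝ × ℝ := (a * s₁ / s) • w₁ + (b * s₂ / s) • w₂ with hw
    have hwW : w ∈ W := by
      apply hWconv hw₁ hw₂ (by positivity) (by positivity)
      field_simp
      linarith
    refine ⟨(s, w), ⟨⟨hsa, hsb⟩, hwW⟩, ?_⟩
    show s • w = a • (s₁ • w₁) + b • (s₂ • w₂)
    rw [hw, smul_add, smul_smul, smul_smul, smul_smul, smul_smul]
    have e₁ : s * (a * s₁ / s) = a * s₁ := by field_simp
    have e₂ : s * (b * s₂ / s) = b * s₂ := by field_simp
    rw [e₁, e₂]
  · -- compactness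
    have hsph : IsCompact {u : Fin n → ℝ | u ⬝ᵥ u = 1} := by
      apply IsCompact.of_isClosed_subset (isCompact_closedBall (0 : Fin n → ℝ) 1)
      · have : {u : Fin n → ℝ | u ⬝ᵥ u = 1} = (fun u : Fin n → ℝ => u ⬝ᵥ u) ⁻¹' {1} := rfl
        rw [this]
        apply IsClosed.preimage ?_ isClosed_singleton
        simp only [dotProduct]
        fun_prop
      · intro u hu
        rw [Metric.mem_closedBall, dist_zero_right]
        refine pi_norm_le_iff_of_nonneg (by norm_num) |>.mpr fun i => ?_
        rw [Real.norm_eq_abs]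
        rw [abs_le_one_iff_mul_self_le_one]
        calc u i * u i ≤ ∑ j, u j * u j :=
              Finset.single_le_sum (fun j _ => mul_self_nonneg (u j)) (Finset.mem_univ i)
        _ = 1 := hu
    have hWimg : W = (fun u : Fin n → ℝ => (qf A' u, qf B' u)) '' {u | u ⬝ᵥ u = 1} := by
      ext p
      constructor
      · rintro ⟨u, h1, h2⟩; exact ⟨u, h1, h2.symm⟩
      · rintro ⟨u, h1, h2⟩; exact ⟨u, h1, h2.symm⟩
    have hWcomp : IsCompact W := by
      rw [hWimg]
      exact hsph.image ((qf_cont A').prodMk (qf_cont B'))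
    exact (isCompact_Icc.prod hWcomp).image continuous_smul
end

section
/- Let Ω ⊂ {(s,t) : 0 < t ≤ t_max} be convex, f(s,t) = s − √t, let (s*, t*) minimize f over Ω, and let (s_k, t_k) ∈ Ω satisfy f(s_k, t_k) − f(s*, t*) ≤ ε for some ε ≥ 0. Then |√t_k − √t*| ≤ √(2 ε √t_max). -/
/-!
Convexity of `Ω` turns the minimality of `(s*, t*)` for `f(s,t) = s - √t` into the first-order
condition that the linearisation `d(s,t) = s - t / (2√t*)` is minimised there as well. The gap
between `f` and its linearisation is the identity
`f(s,t) - f(s*,t*) = d(s,t) - d(s*,t*) + (√t - √t*)² / (2√t*)`,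
so `(√t_k - √t*)² ≤ 2√t* ε ≤ 2√t_max ε`.
-/

open Real

theorem Convex.hasFDerivWithinAt_nonneg_of_isMinOn {E : Type*} [NormedAddCommGroup E]
    [NormedSpace ℝ E] {s : Set E} {f : E → ℝ} {f' : E →L[ℝ] ℝ} {a y : E} (hs : Convex ℝ s)
    (ha : a ∈ s) (hy : y ∈ s) (hmin : IsMinOn f s a) (hf : HasFDerivWithinAt f f' s a) :
    0 ≤ f' (y - a) :=
  hmin.localize.hasFDerivWithinAt_nonneg hf
    (sub_mem_posTangentConeAt_of_segment_subset (hs.segment_subset ha hy))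

theorem hasFDerivAt_fst_sub_sqrt_snd {p : ℝ × ℝ} (hp : p.2 ≠ 0) :
    HasFDerivAt (fun q : ℝ × ℝ => q.1 - √q.2)
      (ContinuousLinearMap.fst ℝ ℝ ℝ - (1 / (2 * √p.2)) • ContinuousLinearMap.snd ℝ ℝ ℝ) p :=
  hasFDerivAt_fst.sub ((hasDerivAt_sqrt hp).comp_hasFDerivAt p hasFDerivAt_snd)

theorem sub_div_two_sqrt_le_of_isMinOn {Ω : Set (ℝ × ℝ)} (hΩ : Convex ℝ Ω) {pstar p : ℝ × ℝ}
    (hstar : pstar ∈ Ω) (hp : p ∈ Ω) (htstar : 0 < pstar.2)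
    (hmin : IsMinOn (fun q : ℝ × ℝ => q.1 - √q.2) Ω pstar) :
    (p.2 - pstar.2) / (2 * √pstar.2) ≤ p.1 - pstar.1 := by
  have h := hΩ.hasFDerivWithinAt_nonneg_of_isMinOn hstar hp hmin
    (hasFDerivAt_fst_sub_sqrt_snd htstar.ne').hasFDerivWithinAt
  simp only [sub_apply, smul_apply, ContinuousLinearMap.coe_fst', ContinuousLinearMap.coe_snd',
    Prod.fst_sub, Prod.snd_sub, smul_eq_mul, one_div, sub_nonneg] at h
  rwa [div_eq_inv_mul]

theorem sq_sqrt_sub_sqrt_eq {t t₀ : ℝ} (ht : 0 ≤ t) (ht₀ : 0 < t₀) :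
    (√t - √t₀) ^ 2 = 2 * √t₀ * ((t - t₀) / (2 * √t₀) - (√t - √t₀)) := by
  have hb : 0 < √t₀ := sqrt_pos.mpr ht₀
  field_simp
  linear_combination (sq_sqrt ht) - (sq_sqrt ht₀.le)

theorem sqrt_t_convergence_general (tmax ε : ℝ)
    (Ω : Set (ℝ × ℝ)) (hΩ : Convex ℝ Ω)
    (hsub : Ω ⊆ {p : ℝ × ℝ | 0 < p.2 ∧ p.2 ≤ tmax})
    (pstar pk : ℝ × ℝ) (hstar : pstar ∈ Ω) (hk : pk ∈ Ω)
    (hmin : ∀ p ∈ Ω, pstar.1 - Real.sqrt pstar.2 ≤ p.1 - Real.sqrt p.2)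
    (hgap : (pk.1 - Real.sqrt pk.2) - (pstar.1 - Real.sqrt pstar.2) ≤ ε) :
    |Real.sqrt pk.2 - Real.sqrt pstar.2| ≤ Real.sqrt (2 * ε * Real.sqrt tmax) := by
  obtain ⟨htstar, htstar_le⟩ := hsub hstar
  have hlin := sub_div_two_sqrt_le_of_isMinOn hΩ hstar hk htstar (isMinOn_iff.2 hmin)
  have hε : 0 ≤ ε := (sub_nonneg.2 (hmin pk hk)).trans hgap
  apply abs_le_sqrt
  calc (√pk.2 - √pstar.2) ^ 2
      = 2 * √pstar.2 * ((pk.2 - pstar.2) / (2 * √pstar.2) - (√pk.2 - √pstar.2)) :=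
        sq_sqrt_sub_sqrt_eq (hsub hk).1.le htstar
    _ ≤ 2 * √pstar.2 * ε := by gcongr; linarith
    _ ≤ 2 * √tmax * ε := by gcongr
    _ = 2 * ε * √tmax := by ring

theorem sqrt_t_convergence (tmax ε : ℝ) (hε : 0 ≤ ε)
    (Ω : Set (ℝ × ℝ)) (hΩ : Convex ℝ Ω)
    (hsub : Ω ⊆ {p : ℝ × ℝ | 0 < p.2 ∧ p.2 ≤ tmax})
    (pstar pk : ℝ × ℝ) (hstar : pstar ∈ Ω) (hk : pk ∈ Ω)
    (hmin : ∀ p ∈ Ω, pstar.1 - Real.sqrt pstar.2 ≤ p.1 - Real.sqrt p.2)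
    (hgap : (pk.1 - Real.sqrt pk.2) - (pstar.1 - Real.sqrt pstar.2) ≤ ε) :
    |Real.sqrt pk.2 - Real.sqrt pstar.2| ≤ Real.sqrt (2 * ε * Real.sqrt tmax) :=
  sqrt_t_convergence_general tmax ε Ω hΩ hsub pstar pk hstar hk hmin hgap
end
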